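/- arXiv:0809.2947 — 2 statements merged into one kernel-verified Lean document; each statement's English description precedes it below -/
import Mathlib

section
/- An integral domain D is a ∗-Prüfer domain if and only if (F(A^∗ ∩ B^∗))^∗ = (FA)^∗ ∩ (FB)^∗ for every nonzero finitely generated fractional ideal F and all nonzero fractional ideals A, B of D. -/
/-! If `F` is `∗`-invertible, every `x ∈ (FA)^∗ ∩ (FB)^∗` satisfies `x F⁻¹ ⊆ A^∗ ∩ B^∗`, and
multiplying back by `F` and closing gives `x ∈ (F(A^∗ ∩ B^∗))^∗`.

Conversely, `∗`-invertibility of a finitely generated ideal is built up one generator at a time.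
If `X` and `Y` are `∗`-invertible, then `(X + Y)(X^∗ ∩ Y^∗) ⊆ (XY)^∗`, while distributivity gives
`((X + Y)(X^∗ ∩ Y^∗))^∗ = ((X + Y)X)^∗ ∩ ((X + Y)Y)^∗ ⊇ (XY)^∗`. Hence `(X^∗ ∩ Y^∗)(XY)⁻¹` is a
`∗`-inverse of `X + Y`, and any `G` with `(FG)^∗ = D` lies in `F⁻¹`, forcing `(FF⁻¹)^∗ = D`. -/

open FractionalIdeal

/-- A star operation on an integral domain `D` with fraction field `K`, acting on
fractional ideals: it fixes `D`, is extensive, monotone, idempotent (all on nonzero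
ideals), and commutes with multiplication by nonzero principal fractional ideals. -/
structure StarOp (D : Type*) [CommRing D] [IsDomain D] (K : Type*) [Field K]
    [Algebra D K] [IsFractionRing D K] where
  star : FractionalIdeal (nonZeroDivisors D) K → FractionalIdeal (nonZeroDivisors D) K
  star_one : star 1 = 1
  le_star : ∀ {A}, A ≠ 0 → A ≤ star A
  star_mono : ∀ {A B}, A ≠ 0 → A ≤ B → star A ≤ star B
  star_idem : ∀ {A}, A ≠ 0 → star (star A) = star A
  star_smul : ∀ {A : FractionalIdeal (nonZeroDivisors D) K} (x : K), x ≠ 0 → A ≠ 0 →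
    star (spanSingleton (nonZeroDivisors D) x * A) = spanSingleton (nonZeroDivisors D) x * star A

variable {D K : Type*} [CommRing D] [IsDomain D] [Field K] [Algebra D K] [IsFractionRing D K]

open scoped nonZeroDivisors

namespace FractionalIdeal

variable {I J : FractionalIdeal D⁰ K}

instance : NoZeroDivisors (FractionalIdeal D⁰ K) where
  eq_zero_or_eq_zero_of_mul_eq_zero {I J} h := by
    rw [← coeToSubmodule_eq_bot, coe_mul] at h
    simpa only [coeToSubmodule_eq_bot] using Submodule.mul_eq_bot.mp h

theorem inf_ne_zero (hI : I ≠ 0) (hJ : J ≠ 0) : I ⊓ J ≠ 0 := by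
  obtain ⟨a, ha, haI⟩ := exists_ne_zero_mem_isInteger hI
  obtain ⟨b, hb, hbJ⟩ := exists_ne_zero_mem_isInteger hJ
  have hab : algebraMap D K (a * b) ∈ I ⊓ J := by
    rw [← mem_coe, coe_inf, map_mul]
    refine ⟨?_, ?_⟩
    · rw [mul_comm, ← Algebra.smul_def]
      exact (I : Submodule D K).smul_mem b haI
    · rw [← Algebra.smul_def]
      exact (J : Submodule D K).smul_mem a hbJ
  intro h
  rw [h, mem_zero_iff, IsFractionRing.to_map_eq_zero_iff] at hab
  exact mul_ne_zero ha hb hab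

theorem mul_inv_ne_zero (hI : I ≠ 0) : I * I⁻¹ ≠ 0 :=
  (bot_lt_mul_inv hI).ne'

protected theorem mul_inv_le_one (I : FractionalIdeal D⁰ K) : I * I⁻¹ ≤ 1 :=
  mul_one_div_le_one

end FractionalIdeal

namespace StarOp

variable (s : StarOp D K) {A B F G X Y : FractionalIdeal D⁰ K}

theorem star_ne_zero (hA : A ≠ 0) : s.star A ≠ 0 :=
  ne_bot_of_le_ne_bot hA (s.le_star hA)

theorem star_le_one (hA : A ≠ 0) (h : A ≤ 1) : s.star A ≤ 1 :=
  s.star_one ▸ s.star_mono hA h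

theorem mul_star_le (hB : B ≠ 0) : A * s.star B ≤ s.star (A * B) := by
  refine mul_le.mpr fun a ha b hb => ?_
  rcases eq_or_ne a 0 with rfl | ha0
  · simpa only [zero_mul] using FractionalIdeal.zero_mem _
  · have haB : spanSingleton D⁰ a * B ≠ 0 := mul_ne_zero (spanSingleton_ne_zero_iff.mpr ha0) hB
    refine s.star_mono haB (mul_le_mul_left (spanSingleton_le_iff_mem.mpr ha) B) ?_
    rw [s.star_smul a ha0 hB]
    exact mem_singleton_mul.mpr ⟨b, hb, rfl⟩

theorem star_mul_star (hA : A ≠ 0) (hB : B ≠ 0) : s.star (A * s.star B) = s.star (A * B) := by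
  refine le_antisymm ?_ (s.star_mono (mul_ne_zero hA hB) (mul_le_mul_right (s.le_star hB) A))
  simpa only [s.star_idem (mul_ne_zero hA hB)] using
    s.star_mono (mul_ne_zero hA (s.star_ne_zero hB)) (s.mul_star_le hB)

theorem star_star_mul (hA : A ≠ 0) (hB : B ≠ 0) : s.star (s.star A * B) = s.star (A * B) := by
  rw [mul_comm, s.star_mul_star hB hA, mul_comm]

theorem star_mul_mul_inv_le (hF : F ≠ 0) (hA : A ≠ 0) : s.star (F * A) * F⁻¹ ≤ s.star A :=
  calc s.star (F * A) * F⁻¹ ≤ s.star (F * A * F⁻¹) := by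
        rw [mul_comm, mul_comm (F * A)]; exact s.mul_star_le (mul_ne_zero hF hA)
    _ ≤ s.star A := by
        rw [mul_right_comm]
        refine s.star_mono (mul_ne_zero (mul_inv_ne_zero hF) hA) ?_
        simpa only [one_mul] using mul_le_mul_left (FractionalIdeal.mul_inv_le_one F) A

def IsInvertible (F : FractionalIdeal D⁰ K) : Prop :=
  s.star (F * F⁻¹) = 1

theorem isInvertible_of_star_mul_eq_one (h0 : F * G ≠ 0) (h : s.star (F * G) = 1) :
    s.IsInvertible F := by
  have hF : F ≠ 0 := left_ne_zero_of_mul h0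
  have hG : G ≤ F⁻¹ := by
    rw [inv_eq, le_div_iff_mul_le hF, mul_comm, ← h]
    exact s.le_star h0
  exact le_antisymm (s.star_le_one (mul_inv_ne_zero hF) (FractionalIdeal.mul_inv_le_one F))
    (h ▸ s.star_mono h0 (mul_le_mul_right hG F))

theorem isInvertible_spanSingleton {x : K} (hx : x ≠ 0) :
    s.IsInvertible (spanSingleton D⁰ x) := by
  rw [IsInvertible, spanSingleton_mul_inv K hx, s.star_one]

variable {s} in
theorem IsInvertible.mul (hXi : s.IsInvertible X) (hYi : s.IsInvertible Y) (hX : X ≠ 0)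
    (hY : Y ≠ 0) : s.IsInvertible (X * Y) := by
  have hne : X * X⁻¹ * (Y * Y⁻¹) ≠ 0 := mul_ne_zero (mul_inv_ne_zero hX) (mul_inv_ne_zero hY)
  refine s.isInvertible_of_star_mul_eq_one (G := X⁻¹ * Y⁻¹) (by rwa [mul_mul_mul_comm]) ?_
  rw [mul_mul_mul_comm, ← s.star_star_mul (mul_inv_ne_zero hX) (mul_inv_ne_zero hY), hXi,
    one_mul, hYi]

theorem le_star_mul_of_isInvertible (hF : F ≠ 0) (hFi : s.IsInvertible F)
    (A : FractionalIdeal D⁰ K) : A ≤ s.star (A * (F * F⁻¹)) :=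
  calc A = A * s.star (F * F⁻¹) := by rw [hFi, mul_one]
    _ ≤ s.star (A * (F * F⁻¹)) := s.mul_star_le (mul_inv_ne_zero hF)

theorem star_mul_inf_of_isInvertible (hF : F ≠ 0) (hFi : s.IsInvertible F) (hA : A ≠ 0)
    (hB : B ≠ 0) :
    s.star (F * (s.star A ⊓ s.star B)) = s.star (F * A) ⊓ s.star (F * B) := by
  have hW : F * (s.star A ⊓ s.star B) ≠ 0 :=
    mul_ne_zero hF (inf_ne_zero (s.star_ne_zero hA) (s.star_ne_zero hB))
  have star_le {C : FractionalIdeal D⁰ K} (hC : C ≠ 0) (hle : s.star A ⊓ s.star B ≤ s.star C) :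
      s.star (F * (s.star A ⊓ s.star B)) ≤ s.star (F * C) :=
    s.star_mul_star hF hC ▸ s.star_mono hW (mul_le_mul_right hle F)
  refine le_antisymm (le_inf (star_le hA inf_le_left) (star_le hB inf_le_right)) ?_
  set I := s.star (F * A) ⊓ s.star (F * B)
  have hIF : I * F⁻¹ ≤ s.star A ⊓ s.star B :=
    le_inf ((mul_le_mul_left inf_le_left _).trans (s.star_mul_mul_inv_le hF hA))
      ((mul_le_mul_left inf_le_right _).trans (s.star_mul_mul_inv_le hF hB))
  have hI : I ≠ 0 :=
    inf_ne_zero (s.star_ne_zero (mul_ne_zero hF hA)) (s.star_ne_zero (mul_ne_zero hF hB))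
  calc I ≤ s.star (I * (F * F⁻¹)) := s.le_star_mul_of_isInvertible hF hFi I
    _ = s.star (F * (I * F⁻¹)) := by rw [mul_left_comm]
    _ ≤ s.star (F * (s.star A ⊓ s.star B)) :=
        s.star_mono (by simpa only [mul_left_comm] using mul_ne_zero hI (mul_inv_ne_zero hF))
          (mul_le_mul_right hIF F)

theorem star_add_mul_inf_eq_star_mul (hX : X ≠ 0) (hY : Y ≠ 0)
    (hdist : s.star ((X + Y) * (s.star X ⊓ s.star Y)) =
      s.star ((X + Y) * X) ⊓ s.star ((X + Y) * Y)) :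
    s.star ((X + Y) * (s.star X ⊓ s.star Y)) = s.star (X * Y) := by
  have hXY : X * Y ≠ 0 := mul_ne_zero hX hY
  have hle : (X + Y) * (s.star X ⊓ s.star Y) ≤ s.star (X * Y) := by
    rw [add_mul, ← sup_eq_add]
    refine sup_le ((mul_le_mul_right inf_le_right X).trans (s.mul_star_le hY)) ?_
    exact (mul_le_mul_right inf_le_left Y).trans (mul_comm X Y ▸ s.mul_star_le hX)
  refine le_antisymm ?_ (hdist ▸ le_inf ?_ ?_)
  · have hne : (X + Y) * (s.star X ⊓ s.star Y) ≠ 0 := by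
      refine mul_ne_zero ?_ (inf_ne_zero (s.star_ne_zero hX) (s.star_ne_zero hY))
      exact fun h => hX (add_eq_zero.mp h).1
    simpa only [s.star_idem hXY] using s.star_mono hne hle
  · exact s.star_mono hXY (mul_comm Y X ▸ mul_le_mul_left le_add_self X)
  · exact s.star_mono hXY (mul_le_mul_left le_self_add Y)

variable {s} in
theorem IsInvertible.add (hXi : s.IsInvertible X) (hYi : s.IsInvertible Y) (hX : X ≠ 0)
    (hY : Y ≠ 0)
    (hdist : s.star ((X + Y) * (s.star X ⊓ s.star Y)) =
      s.star ((X + Y) * X) ⊓ s.star ((X + Y) * Y)) :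
    s.IsInvertible (X + Y) := by
  have hXY : X * Y ≠ 0 := mul_ne_zero hX hY
  have hW : (X + Y) * (s.star X ⊓ s.star Y) ≠ 0 :=
    mul_ne_zero (fun h => hX (add_eq_zero.mp h).1)
      (inf_ne_zero (s.star_ne_zero hX) (s.star_ne_zero hY))
  have hinv : (X * Y)⁻¹ ≠ 0 := right_ne_zero_of_mul (mul_inv_ne_zero hXY)
  refine s.isInvertible_of_star_mul_eq_one (G := (s.star X ⊓ s.star Y) * (X * Y)⁻¹)
    (mul_assoc (X + Y) _ _ ▸ mul_ne_zero hW hinv) ?_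
  rw [← mul_assoc, ← s.star_star_mul hW hinv, s.star_add_mul_inf_eq_star_mul hX hY hdist,
    s.star_star_mul hXY hinv]
  exact hXi.mul hYi hX hY

theorem eq_zero_or_isInvertible_of_fg
    (hdist : ∀ F A B : FractionalIdeal D⁰ K, F ≠ 0 → (F : Submodule D K).FG → A ≠ 0 → B ≠ 0 →
      s.star (F * (s.star A ⊓ s.star B)) = s.star (F * A) ⊓ s.star (F * B))
    (hFG : (F : Submodule D K).FG) : F = 0 ∨ s.IsInvertible F := by
  suffices ∀ N : Submodule D K, N.FG →
      ∀ F : FractionalIdeal D⁰ K, (F : Submodule D K) = N → F = 0 ∨ s.IsInvertible F from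
    this _ hFG F rfl
  intro N hN
  induction N, hN using Submodule.fg_induction with
  | singleton x =>
    intro I hI
    obtain rfl : I = spanSingleton D⁰ x := coeToSubmodule_inj.mp (by rw [hI, coe_spanSingleton])
    rcases eq_or_ne x 0 with rfl | hx
    · exact Or.inl spanSingleton_zero
    · exact Or.inr (s.isInvertible_spanSingleton hx)
  | sup N₁ N₂ hN₁ hN₂ ih₁ ih₂ =>
    intro I hI
    let X : FractionalIdeal D⁰ K := ⟨N₁, isFractional_of_le (hI ▸ le_sup_left : N₁ ≤ I)⟩
    let Y : FractionalIdeal D⁰ K := ⟨N₂, isFractional_of_le (hI ▸ le_sup_right : N₂ ≤ I)⟩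
    have hXY : I = X + Y := coeToSubmodule_inj.mp (by rw [coe_add, hI, Submodule.add_eq_sup]; rfl)
    rw [hXY]
    by_cases hX : X = 0
    · simpa only [hX, zero_add] using ih₂ Y rfl
    by_cases hY : Y = 0
    · simpa only [hY, add_zero] using ih₁ X rfl
    refine Or.inr (((ih₁ X rfl).resolve_left hX).add ((ih₂ Y rfl).resolve_left hY) hX hY ?_)
    have hfg : ((X + Y : FractionalIdeal D⁰ K) : Submodule D K).FG := by
      rw [coe_add, Submodule.add_eq_sup]
      exact hN₁.sup hN₂
    exact hdist _ X Y (fun h => hX (add_eq_zero.mp h).1) hfg hX hY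

end StarOp

/-- `D` is a `∗`-Prüfer domain iff `(F(A^∗ ∩ B^∗))^∗ = (FA)^∗ ∩ (FB)^∗` for all
nonzero finitely generated `F` and nonzero fractional ideals `A`, `B`. -/
theorem starPrufer_iff_distrib (s : StarOp D K) :
    (∀ F : FractionalIdeal (nonZeroDivisors D) K, F ≠ 0 → (F : Submodule D K).FG → s.star (F * F⁻¹) = 1) ↔
    (∀ F A B : FractionalIdeal (nonZeroDivisors D) K, F ≠ 0 → (F : Submodule D K).FG → A ≠ 0 → B ≠ 0 →
      s.star (F * (s.star A ⊓ s.star B)) = s.star (F * A) ⊓ s.star (F * B)) := by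
  constructor
  · intro hinv F A B hF hFG hA hB
    exact s.star_mul_inf_of_isInvertible hF (hinv F hF hFG) hA hB
  · intro hdist F hF hFG
    exact (s.eq_zero_or_isInvertible_of_fg hdist hFG).resolve_left hF
end

section
/- An integral domain D is a ∗-Prüfer domain if and only if the group Inv^∗(D) of ∗-invertible ∗-ideals under ∗-multiplication, ordered by reverse inclusion, is a lattice-ordered abelian group in which sup(A,B) = A ∩ B and inf(A,B) = (A+B)^∗ for all A, B ∈ Inv^∗(D). -/
open FractionalIdeal

variable {D K : Type*} [CommRing D] [IsDomain D] [Field K] [Algebra D K] [IsFractionRing D K]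

/-!
In a `∗`-Prüfer domain the key identity is `((A + B)(A ∩ B))^∗ = (AB)^∗`: for `a ∈ A`, `b ∈ B`
the ideal `F = (a, b)` is `∗`-invertible and `ab F⁻¹ ⊆ A ∩ B`, so
`(ab) = (F · ab F⁻¹)^∗ ⊆ ((A + B)(A ∩ B))^∗`. Multiplying by `A⁻¹B⁻¹` shows that `A + B` and
`A ∩ B` are `∗`-invertible whenever `A` and `B` are. Conversely, `(I + J)^∗ = (I^∗ + J^∗)^∗`, so
if `Inv^∗(D)` is closed under `(A, B) ↦ (A + B)^∗`, induction on a finite set of generators shows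
that every nonzero finitely generated fractional ideal is `∗`-invertible.
-/

open scoped nonZeroDivisors

namespace FractionalIdeal

section General

variable {R P : Type*} [CommRing R] {S : Submonoid R} [CommRing P] [Algebra R P]

theorem ne_zero_of_le {I J : FractionalIdeal S P} (hI : I ≠ 0) (h : I ≤ J) : J ≠ 0 :=
  fun hJ => hI (FractionalIdeal.le_zero_iff.mp (hJ ▸ h))

theorem add_mul_inf_le_mul (A B : FractionalIdeal S P) : (A + B) * (A ⊓ B) ≤ A * B := by
  rw [add_mul, ← sup_eq_add]
  exact sup_le (mul_le_mul' le_rfl inf_le_right)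
    ((mul_le_mul' le_rfl inf_le_left).trans_eq (mul_comm B A))

end General

variable {A B F I J : FractionalIdeal D⁰ K}

instance inst_s18 : NoZeroDivisors (FractionalIdeal D⁰ K) where
  eq_zero_or_eq_zero_of_mul_eq_zero {I J} h := by
    by_contra! hIJ
    obtain ⟨x, hx0, hx⟩ := exists_ne_zero_mem_isInteger hIJ.1
    obtain ⟨y, hy0, hy⟩ := exists_ne_zero_mem_isInteger hIJ.2
    have hxy : algebraMap D K (x * y) ∈ I * J := by
      rw [map_mul]; exact mul_mem_mul hx hy
    rw [h, mem_zero_iff, IsFractionRing.to_map_eq_zero_iff] at hxy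
    exact mul_ne_zero hx0 hy0 hxy

theorem inf_ne_zero_s18 (hA : A ≠ 0) (hB : B ≠ 0) : A ⊓ B ≠ 0 := by
  obtain ⟨x, hx0, hx⟩ := exists_ne_zero_mem_isInteger hA
  obtain ⟨y, hy0, hy⟩ := exists_ne_zero_mem_isInteger hB
  have hxyA : algebraMap D K (x * y) ∈ A := by
    rw [map_mul, mul_comm, ← Algebra.smul_def]; exact Submodule.smul_mem _ y hx
  have hxyB : algebraMap D K (x * y) ∈ B := by
    rw [map_mul, ← Algebra.smul_def]; exact Submodule.smul_mem _ x hy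
  intro h
  have hxy : algebraMap D K (x * y) ∈ A ⊓ B := by
    rw [← mem_coe, coe_inf]; exact ⟨hxyA, hxyB⟩
  rw [h, mem_zero_iff, IsFractionRing.to_map_eq_zero_iff] at hxy
  exact mul_ne_zero hx0 hy0 hxy

theorem inv_ne_zero (hI : I ≠ 0) : I⁻¹ ≠ 0 := by
  obtain ⟨a, haD, ha⟩ := I.isFractional
  have hmem : algebraMap D K a ∈ I⁻¹ := by
    rw [mem_inv_iff hI]
    intro y hy
    obtain ⟨r, hr⟩ := ha y hy
    exact (mem_one_iff _).mpr ⟨r, by rw [hr, Algebra.smul_def]⟩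
  intro h
  rw [h, mem_zero_iff] at hmem
  exact IsFractionRing.to_map_ne_zero_of_mem_nonZeroDivisors haD hmem

theorem mul_inv_le_one_of_le (h : I ≤ F) : I * F⁻¹ ≤ 1 :=
  (mul_le_mul' h le_rfl).trans mul_one_div_le_one

end FractionalIdeal

namespace StarOp

variable (s : StarOp D K) {A B C F I J : FractionalIdeal D⁰ K}

def IsPrufer : Prop :=
  ∀ F : FractionalIdeal D⁰ K, F ≠ 0 → (F : Submodule D K).FG → s.star (F * F⁻¹) = 1

/-- The underlying set of the group `Inv^∗(D)`. -/
def invIdeals : Set (FractionalIdeal D⁰ K) :=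
  {A | A ≠ 0 ∧ s.star A = A ∧ s.star (A * A⁻¹) = 1}

theorem star_ne_zero_s18 (hI : I ≠ 0) : s.star I ≠ 0 :=
  ne_zero_of_le hI (s.le_star hI)

theorem star_le_star_of_le_star (hI : I ≠ 0) (hJ : J ≠ 0) (h : I ≤ s.star J) :
    s.star I ≤ s.star J :=
  (s.star_mono hI h).trans_eq (s.star_idem hJ)

theorem star_le_one_s18 (hI : I ≠ 0) (h : I ≤ 1) : s.star I ≤ 1 :=
  (s.star_mono hI h).trans_eq s.star_one

theorem star_spanSingleton {x : K} (hx : x ≠ 0) :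
    s.star (spanSingleton D⁰ x) = spanSingleton D⁰ x := by
  simpa only [mul_one, s.star_one] using s.star_smul (A := 1) x hx one_ne_zero

theorem star_mul_le (hI : I ≠ 0) : s.star I * J ≤ s.star (I * J) := by
  rw [mul_le]
  intro i hi j hj
  rcases eq_or_ne j 0 with rfl | hj0
  · simpa only [mul_zero] using zero_mem (s.star (I * J))
  have hjI : spanSingleton D⁰ j * I ≤ I * J := by
    rw [mul_comm I J]; exact mul_le_mul' (spanSingleton_le_iff_mem.mpr hj) le_rfl
  have h := s.star_mono (mul_ne_zero (spanSingleton_ne_zero_iff.mpr hj0) hI) hjI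
  rw [s.star_smul j hj0 hI] at h
  rw [mul_comm i j]
  exact h (mul_mem_mul (mem_spanSingleton_self _ _) hi)

theorem star_mul_star_left (hI : I ≠ 0) (hJ : J ≠ 0) : s.star (s.star I * J) = s.star (I * J) := by
  have hle : I * J ≤ s.star I * J := mul_le_mul' (s.le_star hI) le_rfl
  exact le_antisymm
    (s.star_le_star_of_le_star (mul_ne_zero (s.star_ne_zero_s18 hI) hJ) (mul_ne_zero hI hJ)
      (s.star_mul_le hI))
    (s.star_mono (mul_ne_zero hI hJ) hle)

theorem star_add_star_right (hI : I ≠ 0) (hJ : J ≠ 0) : s.star (I + s.star J) = s.star (I + J) := by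
  have hIJ : I + J ≠ 0 := ne_zero_of_le hI le_self_add
  have hle : I + J ≤ I + s.star J := add_le_add le_rfl (s.le_star hJ)
  have hge : I + s.star J ≤ s.star (I + J) := by
    rw [← sup_eq_add]
    exact sup_le (le_self_add.trans (s.le_star hIJ)) (s.star_mono hJ le_add_self)
  exact le_antisymm (s.star_le_star_of_le_star (ne_zero_of_le hIJ hle) hIJ hge)
    (s.star_mono hIJ hle)

theorem inv_star (hF : F ≠ 0) : (s.star F)⁻¹ = F⁻¹ := by
  have hsF := s.star_ne_zero_s18 hF
  refine le_antisymm (inv_anti_mono hF hsF (s.le_star hF)) ?_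
  rw [inv_eq (I := s.star F), le_div_iff_mul_le hsF, mul_comm]
  exact (s.star_mul_le hF).trans
    (s.star_le_one_s18 (mul_ne_zero hF (inv_ne_zero hF)) (mul_inv_le_one_of_le le_rfl))

theorem star_mul_inv_star (hF : F ≠ 0) : s.star (s.star F * (s.star F)⁻¹) = s.star (F * F⁻¹) := by
  rw [s.inv_star hF, s.star_mul_star_left hF (inv_ne_zero hF)]

theorem star_mul_eq_one (hI : I ≠ 0) (hJ : J ≠ 0) (hI1 : s.star I = 1) (hJ1 : s.star J = 1) :
    s.star (I * J) = 1 := by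
  rw [← s.star_mul_star_left hI hJ, hI1, one_mul, hJ1]

theorem star_mul_inv_eq_one_of_star_mul_eq_one (hI : I ≠ 0) (hJ : J ≠ 0) (h : s.star (I * J) = 1) :
    s.star (I * I⁻¹) = 1 := by
  have hJI : J ≤ I⁻¹ := by
    rw [inv_eq, le_div_iff_mul_le hI, mul_comm, ← h]
    exact s.le_star (mul_ne_zero hI hJ)
  have hII : I * I⁻¹ ≠ 0 := mul_ne_zero hI (inv_ne_zero hI)
  refine le_antisymm (s.star_le_one_s18 hII (mul_inv_le_one_of_le le_rfl)) ?_
  exact h.symm.trans_le (s.star_mono (mul_ne_zero hI hJ) (mul_le_mul' le_rfl hJI))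

theorem spanSingleton_mul_le_star_add_mul_inf (hP : s.IsPrufer) {a b : K} (ha : a ∈ A)
    (hb : b ∈ B) :
    spanSingleton D⁰ (a * b) ≤ s.star ((A + B) * (A ⊓ B)) := by
  rcases eq_or_ne a 0 with rfl | ha0
  · simpa only [zero_mul, spanSingleton_zero] using FractionalIdeal.zero_le _
  rcases eq_or_ne b 0 with rfl | hb0
  · simpa only [mul_zero, spanSingleton_zero] using FractionalIdeal.zero_le _
  set F := spanSingleton D⁰ a + spanSingleton D⁰ b
  have hF0 : F ≠ 0 := ne_zero_of_le (spanSingleton_ne_zero_iff.mpr ha0) le_self_add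
  have hFF : s.star (F * F⁻¹) = 1 := by
    refine hP F hF0 ?_
    rw [coe_add, coe_spanSingleton, coe_spanSingleton]
    exact (Submodule.fg_span_singleton a).sup (Submodule.fg_span_singleton b)
  have hFle : F ≤ A + B :=
    add_le_add (spanSingleton_le_iff_mem.mpr ha) (spanSingleton_le_iff_mem.mpr hb)
  -- a generator `y` of `F` has `y F⁻¹ ≤ 1`, so `ab F⁻¹` lies in both `(a)` and `(b)`
  have hle_of_mem {x y : K} {X : FractionalIdeal D⁰ K} (hx : x ∈ X) (hyF : spanSingleton D⁰ y ≤ F) :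
      spanSingleton D⁰ (x * y) * F⁻¹ ≤ X := by
    rw [← spanSingleton_mul_spanSingleton, mul_assoc]
    exact (mul_le_mul' le_rfl (mul_inv_le_one_of_le hyF)).trans_eq (mul_one _) |>.trans
      (spanSingleton_le_iff_mem.mpr hx)
  have hinf : spanSingleton D⁰ (a * b) * F⁻¹ ≤ A ⊓ B :=
    le_inf (hle_of_mem ha le_add_self) (mul_comm b a ▸ hle_of_mem hb le_self_add)
  have hab0 : a * b ≠ 0 := mul_ne_zero ha0 hb0
  have hII : F * F⁻¹ ≠ 0 := mul_ne_zero hF0 (inv_ne_zero hF0)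
  calc spanSingleton D⁰ (a * b) = s.star (spanSingleton D⁰ (a * b) * (F * F⁻¹)) := by
        rw [s.star_smul _ hab0 hII, hFF, mul_one]
    _ = s.star (F * (spanSingleton D⁰ (a * b) * F⁻¹)) := by rw [mul_left_comm]
    _ ≤ s.star ((A + B) * (A ⊓ B)) :=
        s.star_mono (mul_ne_zero hF0 (mul_ne_zero (spanSingleton_ne_zero_iff.mpr hab0)
          (inv_ne_zero hF0))) (mul_le_mul' hFle hinf)

theorem star_add_mul_inf (hP : s.IsPrufer) (hA : A ≠ 0) (hB : B ≠ 0) :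
    s.star ((A + B) * (A ⊓ B)) = s.star (A * B) := by
  have hAB : (A + B) * (A ⊓ B) ≠ 0 :=
    mul_ne_zero (ne_zero_of_le hA le_self_add) (inf_ne_zero_s18 hA hB)
  refine le_antisymm (s.star_mono hAB (add_mul_inf_le_mul A B)) ?_
  refine s.star_le_star_of_le_star (mul_ne_zero hA hB) hAB ?_
  rw [mul_le]
  intro a ha b hb
  exact spanSingleton_le_iff_mem.mp (s.spanSingleton_mul_le_star_add_mul_inf hP ha hb)

theorem star_add_mul_inf_mul_inv (hP : s.IsPrufer) (hA : A ≠ 0) (hB : B ≠ 0)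
    (hA1 : s.star (A * A⁻¹) = 1) (hB1 : s.star (B * B⁻¹) = 1) :
    s.star ((A + B) * (A ⊓ B) * (A⁻¹ * B⁻¹)) = 1 := by
  have hAB : (A + B) * (A ⊓ B) ≠ 0 :=
    mul_ne_zero (ne_zero_of_le hA le_self_add) (inf_ne_zero_s18 hA hB)
  have hinv : A⁻¹ * B⁻¹ ≠ 0 := mul_ne_zero (inv_ne_zero hA) (inv_ne_zero hB)
  rw [← s.star_mul_star_left hAB hinv, s.star_add_mul_inf hP hA hB,
    s.star_mul_star_left (mul_ne_zero hA hB) hinv, mul_mul_mul_comm]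
  exact s.star_mul_eq_one (mul_ne_zero hA (inv_ne_zero hA)) (mul_ne_zero hB (inv_ne_zero hB))
    hA1 hB1

theorem inf_mem_invIdeals (hP : s.IsPrufer) (hA : A ∈ s.invIdeals) (hB : B ∈ s.invIdeals) :
    A ⊓ B ∈ s.invIdeals := by
  obtain ⟨hA0, hAs, hA1⟩ := hA
  obtain ⟨hB0, hBs, hB1⟩ := hB
  have hinf := inf_ne_zero_s18 hA0 hB0
  refine ⟨hinf, ?_, ?_⟩
  · exact le_antisymm (le_inf ((s.star_mono hinf inf_le_left).trans_eq hAs)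
      ((s.star_mono hinf inf_le_right).trans_eq hBs))
      (s.le_star hinf)
  · refine s.star_mul_inv_eq_one_of_star_mul_eq_one hinf (J := (A + B) * (A⁻¹ * B⁻¹)) ?_ ?_
    · exact mul_ne_zero (ne_zero_of_le hA0 le_self_add)
        (mul_ne_zero (inv_ne_zero hA0) (inv_ne_zero hB0))
    · rw [← s.star_add_mul_inf_mul_inv hP hA0 hB0 hA1 hB1]
      congr 1
      ring

theorem star_add_mem_invIdeals (hP : s.IsPrufer) (hA : A ∈ s.invIdeals) (hB : B ∈ s.invIdeals) :
    s.star (A + B) ∈ s.invIdeals := by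
  obtain ⟨hA0, -, hA1⟩ := hA
  obtain ⟨hB0, -, hB1⟩ := hB
  have hAB : A + B ≠ 0 := ne_zero_of_le hA0 le_self_add
  refine ⟨s.star_ne_zero_s18 hAB, s.star_idem hAB, ?_⟩
  rw [s.star_mul_inv_star hAB]
  refine s.star_mul_inv_eq_one_of_star_mul_eq_one hAB (J := (A ⊓ B) * (A⁻¹ * B⁻¹)) ?_ ?_
  · exact mul_ne_zero (inf_ne_zero_s18 hA0 hB0) (mul_ne_zero (inv_ne_zero hA0) (inv_ne_zero hB0))
  · rw [← s.star_add_mul_inf_mul_inv hP hA0 hB0 hA1 hB1]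
    congr 1
    ring

theorem star_add_le (hA : A ≠ 0) (hC : s.star C = C) (hAC : A ≤ C) (hBC : B ≤ C) :
    s.star (A + B) ≤ C := by
  rw [← hC, ← sup_eq_add]
  exact s.star_mono (ne_zero_of_le hA le_sup_left) (sup_le hAC hBC)

theorem spanSingleton_mem_invIdeals {x : K} (hx : x ≠ 0) : spanSingleton D⁰ x ∈ s.invIdeals := by
  refine ⟨spanSingleton_ne_zero_iff.mpr hx, s.star_spanSingleton hx, ?_⟩
  rw [spanSingleton_inv, spanSingleton_mul_spanSingleton, mul_inv_cancel₀ hx, spanSingleton_one,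
    s.star_one]

theorem star_add_star (hI : I ≠ 0) (hJ : J ≠ 0) :
    s.star (s.star I + s.star J) = s.star (I + J) := by
  rw [s.star_add_star_right (s.star_ne_zero_s18 hI) hJ, add_comm, s.star_add_star_right hJ hI, add_comm]

theorem star_mul_inv_add_eq_one
    (h : ∀ A ∈ s.invIdeals, ∀ B ∈ s.invIdeals, s.star (A + B) ∈ s.invIdeals)
    (hI : I ≠ 0 → s.star (I * I⁻¹) = 1) (hJ : J ≠ 0 → s.star (J * J⁻¹) = 1) (hIJ : I + J ≠ 0) :
    s.star ((I + J) * (I + J)⁻¹) = 1 := by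
  rcases eq_or_ne I 0 with rfl | hI0
  · rw [zero_add] at hIJ ⊢; exact hJ hIJ
  rcases eq_or_ne J 0 with rfl | hJ0
  · rw [add_zero] at hIJ ⊢; exact hI hIJ
  have hstar {F} (hF0 : F ≠ 0) (hF : F ≠ 0 → s.star (F * F⁻¹) = 1) : s.star F ∈ s.invIdeals :=
    ⟨s.star_ne_zero_s18 hF0, s.star_idem hF0, (s.star_mul_inv_star hF0).trans (hF hF0)⟩
  have hmem := (h _ (hstar hI0 hI) _ (hstar hJ0 hJ)).2.2
  rwa [s.star_add_star hI0 hJ0, s.star_mul_inv_star hIJ] at hmem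

theorem isPrufer_of_star_add_mem
    (h : ∀ A ∈ s.invIdeals, ∀ B ∈ s.invIdeals, s.star (A + B) ∈ s.invIdeals) : s.IsPrufer := by
  suffices ∀ N : Submodule D K, N.FG → ∀ F : FractionalIdeal D⁰ K, (F : Submodule D K) = N →
      F ≠ 0 → s.star (F * F⁻¹) = 1 from fun F hF0 hFG => this _ hFG F rfl hF0
  intro N hN
  induction N, hN using Submodule.fg_induction with
  | singleton x =>
    intro F hF hF0
    obtain rfl : F = spanSingleton D⁰ x :=
      coeToSubmodule_injective (hF.trans (coe_spanSingleton _ x).symm)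
    exact (s.spanSingleton_mem_invIdeals (spanSingleton_ne_zero_iff.mp hF0)).2.2
  | sup N₁ N₂ _ _ ih₁ ih₂ =>
    intro F hF hF0
    obtain ⟨F₁, rfl⟩ : ∃ F₁ : FractionalIdeal D⁰ K, (F₁ : Submodule D K) = N₁ :=
      ⟨⟨N₁, isFractional_of_le (hF ▸ le_sup_left)⟩, rfl⟩
    obtain ⟨F₂, rfl⟩ : ∃ F₂ : FractionalIdeal D⁰ K, (F₂ : Submodule D K) = N₂ :=
      ⟨⟨N₂, isFractional_of_le (hF ▸ le_sup_right)⟩, rfl⟩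
    obtain rfl : F = F₁ + F₂ := coeToSubmodule_inj.mp (by rw [hF, coe_add, Submodule.add_eq_sup])
    exact s.star_mul_inv_add_eq_one h (ih₁ _ rfl) (ih₂ _ rfl) hF0

end StarOp

/-- `D` is a `∗`-Prüfer domain iff the group `Inv^∗(D)` of `∗`-invertible
`∗`-ideals, ordered by reverse inclusion, is lattice-ordered with
`sup (A,B) = A ∩ B` and `inf (A,B) = (A+B)^∗`: i.e. for all `A, B ∈ Inv^∗(D)`,
`A ∩ B` and `(A+B)^∗` belong to `Inv^∗(D)`, `A ∩ B` is the greatest element of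
`Inv^∗(D)` contained in both, and `(A+B)^∗` is the least element of `Inv^∗(D)`
containing both. -/
theorem starPrufer_iff_latticeOrdered (s : StarOp D K) :
    (∀ F : FractionalIdeal (nonZeroDivisors D) K, F ≠ 0 → (F : Submodule D K).FG → s.star (F * F⁻¹) = 1) ↔
    (∀ A B : FractionalIdeal (nonZeroDivisors D) K,
      (A ≠ 0 ∧ s.star A = A ∧ s.star (A * A⁻¹) = 1) →
      (B ≠ 0 ∧ s.star B = B ∧ s.star (B * B⁻¹) = 1) →
      ((A ⊓ B ≠ 0 ∧ s.star (A ⊓ B) = A ⊓ B ∧ s.star ((A ⊓ B) * (A ⊓ B)⁻¹) = 1) ∧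
       (s.star (A + B) ≠ 0 ∧ s.star (s.star (A + B)) = s.star (A + B) ∧
         s.star (s.star (A + B) * (s.star (A + B))⁻¹) = 1) ∧
       (∀ C : FractionalIdeal (nonZeroDivisors D) K, (C ≠ 0 ∧ s.star C = C ∧ s.star (C * C⁻¹) = 1) →
         C ≤ A → C ≤ B → C ≤ A ⊓ B) ∧
       (∀ C : FractionalIdeal (nonZeroDivisors D) K, (C ≠ 0 ∧ s.star C = C ∧ s.star (C * C⁻¹) = 1) →
         A ≤ C → B ≤ C → s.star (A + B) ≤ C))) := by
  constructor
  · intro hP A B hA hB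
    exact ⟨s.inf_mem_invIdeals hP hA hB, s.star_add_mem_invIdeals hP hA hB,
      fun C _ hCA hCB => le_inf hCA hCB, fun C hC hAC hBC => s.star_add_le hA.1 hC.2.1 hAC hBC⟩
  · exact fun h => s.isPrufer_of_star_add_mem fun A hA B hB => (h A B hA hB).2.1
end
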